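/- Let X be a digraph on a vertex set V. Then the number of Hamiltonian paths of X and the number of Hamiltonian paths of the complement of X have the same parity, i.e., #{V-listings σ : X Des(σ) = [n−1]} ≡ #{V-listings σ : (complement of X) Des(σ) = [n−1]} (mod 2), where n = |V|. -/

import Mathlib

/-- The 1-based `X`-descent set of a listing `l = (σ_1, …, σ_n)`:
the set of `i ∈ [n-1]` with `(σ_i, σ_{i+1}) ∈ E`. -/
def XDes {V : Type*} (E : V → V → Prop) (l : List V) : Set ℕ :=
  {i : ℕ | ∃ (h1 : 1 ≤ i) (h2 : i ≤ l.length - 1),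
    E (l.get ⟨i - 1, by omega⟩) (l.get ⟨i, by omega⟩)}

/-- Edge relation of the complement digraph: pairs `(u,v)` with `u ≠ v` not in `E`. -/
def complEdge {V : Type*} (E : V → V → Prop) (u v : V) : Prop :=
  u ≠ v ∧ ¬ E u v

/-!
Consider the finite set of path covers of `X`: ordered lists of nonempty, vertex-disjoint
`X`-paths that together contain every vertex. It carries two involutions. Swapping the first
two paths fixes exactly the covers by a single path, i.e. the Hamiltonian paths of `X`.
The second involution looks, in the concatenated listing, at the first gap that lies inside
a path or between two paths joined by an edge of `X`, and splits or merges there; its fixed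
points are the covers by single vertices with no `X`-edge between neighbours, i.e. the
Hamiltonian paths of the complement. An involution of a finite set has as many fixed points
as the set has elements, modulo 2.
-/

open Function List

theorem Function.Involutive.card_modEq_card_fixedPoints {α : Type*} [Finite α] {f : α → α}
    (hf : Involutive f) : Nat.card α ≡ Nat.card (fixedPoints f) [MOD 2] := by
  classical
  cases nonempty_fintype α
  simp only [Nat.card_eq_fintype_card]
  exact Equiv.Perm.card_fixedPoints_modEq (f := f) (p := 2) (n := 1) (funext hf)

namespace List

variable {α : Type*}

def swapFirstTwo : List α → List α
  | a :: b :: t => b :: a :: t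
  | l => l

theorem swapFirstTwo_involutive : Involutive (swapFirstTwo (α := α)) := by
  rintro (_ | ⟨a, _ | ⟨b, t⟩⟩) <;> rfl

theorem perm_swapFirstTwo (l : List α) : l.swapFirstTwo.Perm l := by
  rcases l with _ | ⟨a, _ | ⟨b, t⟩⟩
  exacts [.rfl, .rfl, .swap _ _ _]

theorem swapFirstTwo_eq_self_iff {l : List α} (hl : l.Nodup) :
    l.swapFirstTwo = l ↔ l.length ≤ 1 := by
  rcases l with _ | ⟨a, _ | ⟨b, t⟩⟩
  · simp [swapFirstTwo]
  · simp [swapFirstTwo]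
  · simp only [swapFirstTwo, cons.injEq, length_cons]
    grind

theorem flatten_map_singleton (l : List α) : (l.map ([·])).flatten = l := by
  rw [← flatMap_def, flatMap_singleton']

theorem nodup_of_nodup_flatten {L : List (List α)} (hne : ∀ p ∈ L, p ≠ [])
    (h : L.flatten.Nodup) : L.Nodup := by
  refine (nodup_flatten.mp h).2.imp_of_mem fun {p q} hp _ hpq hpq' => ?_
  obtain ⟨x, hx⟩ := exists_mem_of_ne_nil p (hne p hp)
  exact hpq hx (hpq' ▸ hx)

theorem finite_setOf_nodup_flatten [Finite α] :
    {L : List (List α) | (∀ p ∈ L, p ≠ []) ∧ L.flatten.Nodup}.Finite := by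
  classical
  cases nonempty_fintype α
  have hfin : {M : List {l : List α // l.Nodup} | M.Nodup}.Finite :=
    Set.finite_coe_iff.mp (inferInstanceAs (Finite {M : List {l : List α // l.Nodup} // M.Nodup}))
  refine (hfin.image (map Subtype.val)).subset ?_
  rintro L ⟨hne, hL⟩
  lift L to List {l : List α // l.Nodup} using (nodup_flatten.mp hL).1
  exact ⟨L, (nodup_of_nodup_flatten hne hL).of_map _, rfl⟩

end List

section PathCover

variable {V : Type*} (E : V → V → Prop)

def HamPath : Type _ := {l : List V // l.Nodup ∧ (∀ x, x ∈ l) ∧ l.IsChain E}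

def IsPathSeq (L : List (List V)) : Prop := ∀ p ∈ L, p ≠ [] ∧ p.IsChain E

def PathCover : Type _ :=
  {L : List (List V) // IsPathSeq E L ∧ L.flatten.Nodup ∧ ∀ x, x ∈ L.flatten}

variable {E}

instance [Finite V] : Finite (PathCover E) :=
  (finite_setOf_nodup_flatten.subset fun _ hL =>
    ⟨fun p hp => (hL.1 p hp).1, hL.2.1⟩).to_subtype

theorem IsPathSeq.eq_ite_of_length_le_one {L : List (List V)} (hL : IsPathSeq E L)
    (hlen : L.length ≤ 1) : L = if L.flatten = [] then [] else [L.flatten] := by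
  rcases L with _ | ⟨p, _ | ⟨q, t⟩⟩
  · simp
  · simp [(hL p (by simp)).1]
  · simp at hlen

theorem IsPathSeq.isChain_flatten_of_length_le_one {L : List (List V)} (hL : IsPathSeq E L)
    (hlen : L.length ≤ 1) : L.flatten.IsChain E := by
  rcases L with _ | ⟨p, _ | ⟨q, t⟩⟩
  · simp
  · simpa using (hL p (by simp)).2
  · simp at hlen

namespace PathCover

def swap (L : PathCover E) : PathCover E :=
  ⟨L.1.swapFirstTwo, fun p hp => L.2.1 p ((perm_swapFirstTwo _).subset hp),
    (perm_swapFirstTwo _).flatten.nodup_iff.mpr L.2.2.1,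
    fun x => (perm_swapFirstTwo _).flatten.mem_iff.mpr (L.2.2.2 x)⟩

theorem swap_involutive : Involutive (swap (E := E)) :=
  fun L => Subtype.ext (swapFirstTwo_involutive L.1)

theorem swap_eq_self_iff (L : PathCover E) : L.swap = L ↔ L.1.length ≤ 1 :=
  Subtype.ext_iff.trans <| swapFirstTwo_eq_self_iff <|
    nodup_of_nodup_flatten (fun p hp => (L.2.1 p hp).1) L.2.2.1

def ofHamPath (l : HamPath E) : PathCover E :=
  ⟨if l.1 = [] then [] else [l.1], by
    split_ifs with h
    · exact ⟨by simp [IsPathSeq], by simp, by simpa [h] using l.2.2.1⟩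
    · exact ⟨by simpa [IsPathSeq] using ⟨h, l.2.2.2⟩, by simpa using l.2.1,
        by simpa using l.2.2.1⟩⟩

def fixedPointsSwapEquiv : fixedPoints (swap (E := E)) ≃ HamPath E where
  toFun L := ⟨L.1.1.flatten, L.1.2.2.1, L.1.2.2.2,
    L.1.2.1.isChain_flatten_of_length_le_one ((swap_eq_self_iff L.1).mp L.2)⟩
  invFun l := ⟨ofHamPath l, (swap_eq_self_iff _).mpr (by unfold ofHamPath; split_ifs <;> simp)⟩
  left_inv L := by
    refine Subtype.ext <| Subtype.ext ?_
    simp only [ofHamPath]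
    exact (L.1.2.1.eq_ite_of_length_le_one ((swap_eq_self_iff L.1).mp L.2)).symm
  right_inv l := by
    refine Subtype.ext ?_
    simp only [ofHamPath]
    split_ifs with h <;> simp [h]

end PathCover

end PathCover

section TogglePaths

variable {V : Type*} (E : V → V → Prop) [DecidableRel E]

def togglePaths : List (List V) → List (List V)
  | (x :: y :: t) :: rest => [x] :: (y :: t) :: rest
  | [x] :: (y :: q) :: rest =>
    if E x y then (x :: y :: q) :: rest else [x] :: togglePaths ((y :: q) :: rest)
  | L => L

variable {E}

theorem flatten_togglePaths (L : List (List V)) : (togglePaths E L).flatten = L.flatten := by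
  fun_induction togglePaths E L <;> simp_all

theorem isPathSeq_togglePaths {L : List (List V)} (hL : IsPathSeq E L) :
    IsPathSeq E (togglePaths E L) := by
  fun_induction togglePaths E L <;> simp_all [IsPathSeq]

theorem togglePaths_cons_cons (y : V) (q : List V) (rest : List (List V)) :
    ∃ q' rest', togglePaths E ((y :: q) :: rest) = (y :: q') :: rest' := by
  rcases q with _ | ⟨z, t⟩
  · rcases rest with _ | ⟨_ | ⟨z, t⟩, rest⟩
    · simp [togglePaths]
    · simp [togglePaths]
    · rw [togglePaths]
      split_ifs <;> simp
  · simp [togglePaths]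

theorem togglePaths_togglePaths {L : List (List V)} (hL : IsPathSeq E L) :
    togglePaths E (togglePaths E L) = L := by
  fun_induction togglePaths E L with
  | case1 x y t rest =>
    simp [togglePaths, (isChain_cons_cons.mp (hL _ mem_cons_self).2).1]
  | case2 x y q rest hxy => simp [togglePaths]
  | case3 x y q rest hxy ih =>
    obtain ⟨q', rest', h⟩ := togglePaths_cons_cons (E := E) y q rest
    rw [h, togglePaths, if_neg hxy, ← h, ih fun p hp => hL p (mem_cons_of_mem _ hp)]
  | case4 L h₁ h₂ => rw [togglePaths.eq_3 E L h₁ h₂]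

theorem togglePaths_map_singleton {l : List V} (hl : l.IsChain fun a b => ¬ E a b) :
    togglePaths E (l.map ([·])) = l.map ([·]) := by
  induction hl with
  | nil | singleton => simp [togglePaths]
  | cons_cons hxy _ ih => simp_all [togglePaths]

theorem IsPathSeq.eq_map_singleton_and_isChain_of_togglePaths_eq_self {L : List (List V)}
    (hL : IsPathSeq E L) (hfix : togglePaths E L = L) :
    L = L.flatten.map ([·]) ∧ L.flatten.IsChain fun a b => ¬ E a b := by
  fun_induction togglePaths E L with
  | case1 x y t rest => simp at hfix
  | case2 x y q rest hxy => simp at hfix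
  | case3 x y q rest hxy ih =>
    obtain ⟨hmap, hchain⟩ := ih (fun p hp => hL p (mem_cons_of_mem _ hp)) (cons.inj hfix).2
    refine ⟨by rw [flatten_cons, singleton_append, map_cons, ← hmap], ?_⟩
    simp only [flatten_cons, cons_append] at hchain ⊢
    exact isChain_cons_cons.mpr ⟨hxy, hchain⟩
  | case4 L h₁ h₂ =>
    rcases L with _ | ⟨_ | ⟨x, _ | ⟨y, t⟩⟩, _ | ⟨_ | ⟨y, q⟩, rest⟩⟩ <;>
      first
      | exact (h₁ _ _ _ _ rfl).elim
      | exact (h₂ _ _ _ _ rfl).elim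
      | simp_all [IsPathSeq]

namespace PathCover

def toggle (L : PathCover E) : PathCover E :=
  ⟨togglePaths E L.1, isPathSeq_togglePaths L.2.1, by rw [flatten_togglePaths]; exact L.2.2⟩

theorem toggle_involutive : Involutive (toggle (E := E)) :=
  fun L => Subtype.ext (togglePaths_togglePaths L.2.1)

def fixedPointsToggleEquiv : fixedPoints (toggle (E := E)) ≃ HamPath fun a b => ¬ E a b where
  toFun L := ⟨L.1.1.flatten, L.1.2.2.1, L.1.2.2.2,
    (L.1.2.1.eq_map_singleton_and_isChain_of_togglePaths_eq_self (congrArg Subtype.val L.2)).2⟩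
  invFun l := ⟨⟨l.1.map ([·]), by simp [IsPathSeq], by
    rw [flatten_map_singleton]; exact ⟨l.2.1, l.2.2.1⟩⟩,
    Subtype.ext (togglePaths_map_singleton l.2.2.2)⟩
  left_inv L := Subtype.ext <| Subtype.ext
    (L.1.2.1.eq_map_singleton_and_isChain_of_togglePaths_eq_self (congrArg Subtype.val L.2)).1.symm
  right_inv l := Subtype.ext (flatten_map_singleton _)

end PathCover

end TogglePaths

section Listing

variable {V : Type*}

theorem XDes_eq_Icc_iff_isChain (R : V → V → Prop) (l : List V) :
    XDes R l = Set.Icc 1 (l.length - 1) ↔ l.IsChain R := by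
  have hsub : XDes R l ⊆ Set.Icc 1 (l.length - 1) := fun i ⟨h1, h2, _⟩ => ⟨h1, h2⟩
  rw [isChain_iff_getElem, Set.Subset.antisymm_iff, and_iff_right hsub]
  constructor
  · intro h i hi
    obtain ⟨_, _, hR⟩ := @h (i + 1) ⟨by omega, by omega⟩
    simpa using hR
  · rintro h i ⟨h1, h2⟩
    refine ⟨h1, h2, ?_⟩
    have := h (i - 1) (by omega)
    simp only [Nat.sub_add_cancel h1] at this
    simpa using this

theorem isChain_complEdge_iff (E : V → V → Prop) {l : List V} (hl : l.Nodup) :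
    l.IsChain (complEdge E) ↔ l.IsChain fun a b => ¬ E a b := by
  simp only [isChain_iff_getElem, complEdge]
  refine forall₂_congr fun i hi => and_iff_right ?_
  rw [Ne, hl.getElem_inj_iff]
  omega

theorem length_eq_card_of_nodup [Fintype V] {l : List V} (hl : l.Nodup) (hmem : ∀ x, x ∈ l) :
    l.length = Fintype.card V := by
  classical
  rw [← toFinset_card_of_nodup hl, Finset.eq_univ_of_forall (s := l.toFinset) (by simpa using hmem),
    Finset.card_univ]

theorem card_XDes_eq_Icc [Fintype V] (R : V → V → Prop) :
    Nat.card {l : List V // l.Nodup ∧ (∀ x, x ∈ l) ∧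
        XDes R l = Set.Icc 1 (Fintype.card V - 1)} = Nat.card (HamPath R) :=
  Nat.card_congr <| Equiv.subtypeEquivRight fun l => and_congr_right fun hl => and_congr_right
    fun hmem => by rw [← length_eq_card_of_nodup hl hmem, XDes_eq_Icc_iff_isChain]

theorem card_hamPath_complEdge (E : V → V → Prop) :
    Nat.card (HamPath (complEdge E)) = Nat.card (HamPath fun a b => ¬ E a b) :=
  Nat.card_congr <| Equiv.subtypeEquivRight fun _ => and_congr_right fun hl =>
    and_congr_right fun _ => isChain_complEdge_iff E hl

end Listing

theorem berge_parity {V : Type*} [Fintype V]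
    (E : V → V → Prop) :
    Nat.card {l : List V // l.Nodup ∧ (∀ x, x ∈ l) ∧
        XDes E l = Set.Icc 1 (Fintype.card V - 1)} ≡
      Nat.card {l : List V // l.Nodup ∧ (∀ x, x ∈ l) ∧
        XDes (complEdge E) l = Set.Icc 1 (Fintype.card V - 1)} [MOD 2] := by
  classical
  rw [card_XDes_eq_Icc, card_XDes_eq_Icc, card_hamPath_complEdge,
    ← Nat.card_congr PathCover.fixedPointsSwapEquiv,
    ← Nat.card_congr PathCover.fixedPointsToggleEquiv]
  exact PathCover.swap_involutive.card_modEq_card_fixedPoints.symm.trans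
    PathCover.toggle_involutive.card_modEq_card_fixedPoints
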